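/- Let A be a Banach algebra. A functional a' ∈ A* is weakly almost periodic (i.e., for all bounded nets (a_i), (b_j) in the unit ball of A, the iterated limits lim_i lim_j ⟨a', a_i b_j⟩ and lim_j lim_i ⟨a', a_i b_j⟩ agree whenever both exist) if and only if ⟨a'' b'', a'⟩ = ⟨a'' ∘ b'', a'⟩ for all a'', b'' ∈ A**, where a'' b'' and a'' ∘ b'' denote the first and second Arens products. Consequently, A is Arens regular if and only if wap(A) = A*. -/

import Mathlib

open ContinuousLinearMap NormedSpace Filter Topology Metric

noncomputable section

namespace Arens

instance instNormedAddCommGroupBidual (E : Type*) [NormedAddCommGroup E] [NormedSpace ℂ E] :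
    NormedAddCommGroup (StrongDual ℂ (StrongDual ℂ E)) :=
  ContinuousLinearMap.toNormedAddCommGroup

instance instNormedSpaceBidual (E : Type*) [NormedAddCommGroup E] [NormedSpace ℂ E] :
    NormedSpace ℂ (StrongDual ℂ (StrongDual ℂ E)) :=
  ContinuousLinearMap.toNormedSpace

section Bilinear

variable {X Y Z : Type*} [NormedAddCommGroup X] [NormedSpace ℂ X]
  [NormedAddCommGroup Y] [NormedSpace ℂ Y] [NormedAddCommGroup Z] [NormedSpace ℂ Z]

/-- The Arens adjoint `m*` of a bounded bilinear map `m : X × Y → Z`,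
`⟨m*(z',x), y⟩ = ⟨z', m(x,y)⟩`. -/
def adj (f : X →L[ℂ] Y →L[ℂ] Z) : StrongDual ℂ Z →L[ℂ] X →L[ℂ] StrongDual ℂ Y :=
  ((ContinuousLinearMap.compL ℂ X (Y →L[ℂ] Z) (Y →L[ℂ] ℂ)).flip f).comp
    (ContinuousLinearMap.compL ℂ Y Z ℂ)

@[simp] lemma adj_apply (f : X →L[ℂ] Y →L[ℂ] Z) (z' : StrongDual ℂ Z) (x : X) (y : Y) :
    adj f z' x y = z' (f x y) := rfl

/-- The Arens triple-adjoint extension `m*** : X** × Y** → Z**` of a bounded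
bilinear map `m : X × Y → Z`. -/
def ext3 (f : X →L[ℂ] Y →L[ℂ] Z) :
    StrongDual ℂ (StrongDual ℂ X) →L[ℂ] StrongDual ℂ (StrongDual ℂ Y) →L[ℂ] StrongDual ℂ (StrongDual ℂ Z) :=
  adj (adj (adj f))

/-- Weak-star convergence of a net `(a i)` of `X` (canonically embedded in `X**`)
to an element `F` of the bidual `X**`. -/
def WStarTendsto {ι : Type*} (a : ι → X) (l : Filter ι) (F : StrongDual ℂ (StrongDual ℂ X)) : Prop :=
  ∀ x' : StrongDual ℂ X, Tendsto (fun i => x' (a i)) l (𝓝 (F x'))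

end Bilinear

section Algebra

variable (A : Type*) [NonUnitalNormedRing A] [NormedSpace ℂ A]
  [IsScalarTower ℂ A A] [SMulCommClass ℂ A A]

/-- The multiplication of a (non-unital) Banach algebra as a bounded bilinear map. -/
abbrev mulCLM : A →L[ℂ] A →L[ℂ] A := ContinuousLinearMap.mul ℂ A

/-- The first Arens product on the bidual `A**`. -/
def fstArens (F G : StrongDual ℂ (StrongDual ℂ A)) : StrongDual ℂ (StrongDual ℂ A) := ext3 (mulCLM A) F G

/-- The second Arens product on the bidual `A**` (`m^{t***t}`). -/
def sndArens (F G : StrongDual ℂ (StrongDual ℂ A)) : StrongDual ℂ (StrongDual ℂ A) :=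
  ext3 ((mulCLM A).flip) G F

/-- A Banach algebra is Arens regular when its two Arens products coincide. -/
def ArensRegular : Prop := ∀ F G : StrongDual ℂ (StrongDual ℂ A), fstArens A F G = sndArens A F G

end Algebra

section ModuleWC

universe u
variable {A : Type u} {B : Type*} [NonUnitalNormedRing A] [NormedSpace ℂ A]
  [NormedAddCommGroup B] [NormedSpace ℂ B]

/-- For a left Banach `A`-module action `πl` on `B`, the element `b' a ∈ B*`,
`⟨b' a, b⟩ = ⟨b', a • b⟩`. -/
def dualSmulL (πl : A →L[ℂ] B →L[ℂ] B) (b' : StrongDual ℂ B) (a : A) : StrongDual ℂ B := adj πl b' a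

/-- The Arens extension `b' a'' ∈ B***`, `⟨b'', b' a''⟩ = ⟨π_ℓ***(a'', b''), b'⟩`. -/
def dualSmulLStar (πl : A →L[ℂ] B →L[ℂ] B) (b' : StrongDual ℂ B) (F : StrongDual ℂ (StrongDual ℂ A)) :
    StrongDual ℂ (StrongDual ℂ (StrongDual ℂ B)) :=
  (inclusionInDoubleDual ℂ (StrongDual ℂ B) b').comp (ext3 πl F)

/-- `b' ∈ B*` has the left-weak*-weak convergence property (`Lw*wc`) with respect to `A`:
for every net `(a_α) ⊆ A` with `a_α → a''` weak* in `A**`, the net `b' a_α` converges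
weakly to `b' a''` in `B*`. -/
def LWStarWC (πl : A →L[ℂ] B →L[ℂ] B) (b' : StrongDual ℂ B) : Prop :=
  ∀ (ι : Type u) (l : Filter ι) (a : ι → A) (F : StrongDual ℂ (StrongDual ℂ A)),
    WStarTendsto a l F →
    ∀ b'' : StrongDual ℂ (StrongDual ℂ B),
      Tendsto (fun i => b'' (dualSmulL πl b' (a i))) l (𝓝 (dualSmulLStar πl b' F b''))

/-- For a right Banach `A`-module action `πr` on `B`, the element `a b' ∈ B*`,
`⟨a b', b⟩ = ⟨b', b • a⟩`. -/
def dualSmulR (πr : B →L[ℂ] A →L[ℂ] B) (a : A) (b' : StrongDual ℂ B) : StrongDual ℂ B :=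
  adj πr.flip b' a

/-- The Arens extension `a'' b' ∈ B***`, `⟨b'', a'' b'⟩ = ⟨π_r^{t***}(a'', b''), b'⟩`. -/
def dualSmulRStar (πr : B →L[ℂ] A →L[ℂ] B) (F : StrongDual ℂ (StrongDual ℂ A)) (b' : StrongDual ℂ B) :
    StrongDual ℂ (StrongDual ℂ (StrongDual ℂ B)) :=
  (inclusionInDoubleDual ℂ (StrongDual ℂ B) b').comp (ext3 πr.flip F)

/-- `b' ∈ B*` has the right-weak*-weak convergence property (`Rw*wc`) with respect to `A`. -/
def RWStarWC (πr : B →L[ℂ] A →L[ℂ] B) (b' : StrongDual ℂ B) : Prop :=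
  ∀ (ι : Type u) (l : Filter ι) (a : ι → A) (F : StrongDual ℂ (StrongDual ℂ A)),
    WStarTendsto a l F →
    ∀ b'' : StrongDual ℂ (StrongDual ℂ B),
      Tendsto (fun i => b'' (dualSmulR πr (a i) b')) l (𝓝 (dualSmulRStar πr F b' b''))

end ModuleWC

section AlgebraWC

variable (A : Type u) [NonUnitalNormedRing A] [NormedSpace ℂ A]
  [IsScalarTower ℂ A A] [SMulCommClass ℂ A A]

/-- The product `a'' a' ∈ A*` (first step of the first Arens product):
`⟨a'' a', a⟩ = ⟨a'', a' a⟩` where `⟨a' a, b⟩ = ⟨a', a b⟩`. -/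
def biSmul (F : StrongDual ℂ (StrongDual ℂ A)) (a' : StrongDual ℂ A) : StrongDual ℂ A :=
  F.comp (adj (mulCLM A) a')

/-- The element `a · a' ∈ A*`, `⟨a a', b⟩ = ⟨a', b a⟩`. -/
def leftMulDual (a : A) (a' : StrongDual ℂ A) : StrongDual ℂ A := a'.comp ((mulCLM A).flip a)

/-- `A*` has the `Rw*wc`-property with respect to `A`: for every `a' ∈ A*` and every net
`(a_α) ⊆ A` with `a_α → a''` weak* in `A**`, the net `a_α a'` (`⟨a_α a', b⟩ = ⟨a', b a_α⟩`)
converges weakly in `A*` to `a'' a'`. -/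
def RWStarWCDualProp : Prop :=
  ∀ (a' : StrongDual ℂ A) (ι : Type u) (l : Filter ι) (a : ι → A) (F : StrongDual ℂ (StrongDual ℂ A)),
    WStarTendsto a l F →
    ∀ x'' : StrongDual ℂ (StrongDual ℂ A),
      Tendsto (fun i => x'' (leftMulDual A (a i) a')) l (𝓝 (x'' (biSmul A F a')))

/-- `A*` has the `Lw*wc`-property with respect to `A`. -/
def LWStarWCDualProp : Prop := ∀ a' : StrongDual ℂ A, LWStarWC (mulCLM A) a'

/-- `A**` has the `Lw*wc`-property with respect to `A`: for every `x'' ∈ A**` and every net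
`(a_α) ⊆ A` with `a_α → a''` weak* in `A**`, the net `x'' a_α` converges weakly in `A**`
to `x'' a''`. -/
def LWStarWCBidualProp : Prop :=
  ∀ (x'' : StrongDual ℂ (StrongDual ℂ A)) (ι : Type u) (l : Filter ι) (a : ι → A) (F : StrongDual ℂ (StrongDual ℂ A)),
    WStarTendsto a l F →
    ∀ Φ : StrongDual ℂ (StrongDual ℂ (StrongDual ℂ A)),
      Tendsto (fun i => Φ (fstArens A x'' (inclusionInDoubleDual ℂ A (a i)))) l
        (𝓝 (Φ (fstArens A x'' F)))

/-- `D : A → A*` is a derivation: `D(ab) = a·D(b) + D(a)·b`, where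
`(a·f)(x) = f(x a)` and `(f·b)(x) = f(b x)`. -/
def IsDerivation (D : A →L[ℂ] StrongDual ℂ A) : Prop :=
  ∀ a b : A, D (a * b) = (D b).comp ((mulCLM A).flip a) + (D a).comp (mulCLM A b)

/-- `A` is weakly amenable: every bounded derivation `D : A → A*` is inner. -/
def WeaklyAmenable : Prop :=
  ∀ D : A →L[ℂ] StrongDual ℂ A, IsDerivation A D →
    ∃ f : StrongDual ℂ A, ∀ a : A, D a = f.comp ((mulCLM A).flip a) - f.comp (mulCLM A a)

/-- The left action of `A**` (with the first Arens product) on `A***`: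
`(F·Φ)(G) = Φ(G F)`. -/
def ddLeftAct (F : StrongDual ℂ (StrongDual ℂ A)) (Φ : StrongDual ℂ (StrongDual ℂ (StrongDual ℂ A))) :
    StrongDual ℂ (StrongDual ℂ (StrongDual ℂ A)) :=
  Φ.comp ((ext3 (mulCLM A)).flip F)

/-- The right action of `A**` (with the first Arens product) on `A***`:
`(Φ·F)(G) = Φ(F G)`. -/
def ddRightAct (F : StrongDual ℂ (StrongDual ℂ A)) (Φ : StrongDual ℂ (StrongDual ℂ (StrongDual ℂ A))) :
    StrongDual ℂ (StrongDual ℂ (StrongDual ℂ A)) :=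
  Φ.comp (ext3 (mulCLM A) F)

/-- A bounded map `D : A** → A***` is a derivation for the first Arens product. -/
def IsDerivationDD (D : StrongDual ℂ (StrongDual ℂ A) →L[ℂ] StrongDual ℂ (StrongDual ℂ (StrongDual ℂ A))) : Prop :=
  ∀ F G : StrongDual ℂ (StrongDual ℂ A),
    D (fstArens A F G) = ddLeftAct A F (D G) + ddRightAct A G (D F)

/-- `A**` (with the first Arens product) is weakly amenable. -/
def WeaklyAmenableDD : Prop :=
  ∀ D : StrongDual ℂ (StrongDual ℂ A) →L[ℂ] StrongDual ℂ (StrongDual ℂ (StrongDual ℂ A)), IsDerivationDD A D →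
    ∃ Φ : StrongDual ℂ (StrongDual ℂ (StrongDual ℂ A)), ∀ F, D F = ddLeftAct A F Φ - ddRightAct A F Φ

/-- `A*** A** ⊆ A*`: each product `x''' x''` (`⟨x''' x'', a''⟩ = ⟨x''', x'' a''⟩`)
lies in the canonical image of `A*` in `A***`. -/
def TripleDualMulIntoDual : Prop :=
  ∀ (Φ : StrongDual ℂ (StrongDual ℂ (StrongDual ℂ A))) (F : StrongDual ℂ (StrongDual ℂ A)),
    ∃ a' : StrongDual ℂ A, ddRightAct A F Φ = inclusionInDoubleDual ℂ (StrongDual ℂ A) a'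

end AlgebraWC

section DualMap

variable {X Y : Type*} [NormedAddCommGroup X] [NormedSpace ℂ X]
  [NormedAddCommGroup Y] [NormedSpace ℂ Y]

/-- The Banach-space adjoint of a bounded operator. -/
def dualMap' (T : X →L[ℂ] Y) : StrongDual ℂ Y →L[ℂ] StrongDual ℂ X :=
  (ContinuousLinearMap.compL ℂ X Y ℂ).flip T

/-- The second adjoint `D'' : A** → A***` of `D : A → A*`. -/
def secondAdjoint {A : Type*} [NonUnitalNormedRing A] [NormedSpace ℂ A]
    (D : A →L[ℂ] StrongDual ℂ A) :
    StrongDual ℂ (StrongDual ℂ A) →L[ℂ] StrongDual ℂ (StrongDual ℂ (StrongDual ℂ A)) :=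
  dualMap' (dualMap' D)

end DualMap

section Biregular

variable (A B : Type*) [NonUnitalNormedRing A] [NormedSpace ℂ A]
  [NonUnitalNormedRing B] [NormedSpace ℂ B]

/-- A bounded bilinear form `m : A × B → ℂ` is biregular (Ülger): for any sequences
`(a_i), (aa2_j)` in the unit ball of `A` and `(b_i), (bb_j)` in the unit ball of `B`,
the two iterated limits of `m(a_i aa2_j, b_i bb_j)` coincide whenever both exist. -/
def Biregular (m : A →L[ℂ] B →L[ℂ] ℂ) : Prop :=
  ∀ (a aa2 : ℕ → A) (b bb : ℕ → B),
    (∀ i, ‖a i‖ ≤ 1) → (∀ j, ‖aa2 j‖ ≤ 1) → (∀ i, ‖b i‖ ≤ 1) → (∀ j, ‖bb j‖ ≤ 1) →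
    ∀ (g h : ℕ → ℂ) (L L' : ℂ),
      (∀ i, Tendsto (fun j => m (a i * aa2 j) (b i * bb j)) atTop (𝓝 (g i))) →
      Tendsto g atTop (𝓝 L) →
      (∀ j, Tendsto (fun i => m (a i * aa2 j) (b i * bb j)) atTop (𝓝 (h j))) →
      Tendsto h atTop (𝓝 L') → L = L'

/-- Arens regularity of the projective tensor product `A ⊗̂ B`.  By Ülger's theorem
(`[22, Theorem 3.4]`), `A ⊗̂ B` is Arens regular if and only if every bounded bilinear
form `m : A × B → ℂ` is biregular; since the dual of `A ⊗̂ B` is exactly the space of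
bounded bilinear forms on `A × B`, we take this equivalent characterization as the
formalization of Arens regularity of `A ⊗̂ B`. -/
def ProjArensRegular : Prop := ∀ m : A →L[ℂ] B →L[ℂ] ℂ, Biregular A B m

end Biregular

end Arens

/-- `a' ∈ A*` is weakly almost periodic: for all nets `(a_i)`, `(b_j)` in the unit ball
of `A`, the iterated limits of `⟨a', a_i b_j⟩` agree whenever both exist. -/
def Arens.WAP {A : Type u} [NonUnitalNormedRing A] [NormedSpace ℂ A]
    (a' : StrongDual ℂ A) : Prop :=
  ∀ (ι κ : Type u) (li : Filter ι) (lj : Filter κ), li.NeBot → lj.NeBot →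
    ∀ (a : ι → A) (b : κ → A), (∀ i, ‖a i‖ ≤ 1) → (∀ j, ‖b j‖ ≤ 1) →
    ∀ (g : ι → ℂ) (h : κ → ℂ) (L L' : ℂ),
      (∀ i, Tendsto (fun j => a' (a i * b j)) lj (𝓝 (g i))) → Tendsto g li (𝓝 L) →
      (∀ j, Tendsto (fun i => a' (a i * b j)) li (𝓝 (h j))) → Tendsto h lj (𝓝 L') →
      L = L'

/-! For nets `a_i → a''` and `b_j → b''` (weak* in `A**`), `⟨a'' b'', a'⟩` is the iterated limit
`lim_i lim_j ⟨a', a_i b_j⟩` and `⟨a'' ∘ b'', a'⟩` is `lim_j lim_i ⟨a', a_i b_j⟩`. If `a'` is weakly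
almost periodic, Goldstine's theorem supplies such nets in the unit ball for `a''`, `b''` of norm
at most one, and bilinearity removes the norm restriction. Conversely, given nets in the unit ball
with both iterated limits, Banach–Alaoglu provides weak* limits `a''`, `b''` along ultrafilters
refining them, so the two iterated limits are `⟨a'' b'', a'⟩` and `⟨a'' ∘ b'', a'⟩`. -/

namespace ContinuousLinearMap

variable {𝕜 E F G : Type*} [RCLike 𝕜] [NormedAddCommGroup E] [NormedSpace 𝕜 E]
  [NormedAddCommGroup F] [NormedSpace 𝕜 F] [NormedAddCommGroup G] [NormedSpace 𝕜 G]

theorem opNorm_le_of_forall_re_le (f : StrongDual 𝕜 E) {u : ℝ}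
    (hf : ∀ x, ‖x‖ ≤ 1 → RCLike.re (f x) ≤ u) : ‖f‖ ≤ u := by
  have hu : 0 ≤ u := by simpa using hf 0 (by simp)
  refine f.opNorm_le_of_unit_norm hu fun x hx => ?_
  obtain ⟨c, hc, hfx⟩ := RCLike.exists_norm_eq_mul_self (f x)
  have := hf (c • x) (by rw [norm_smul, hc, hx, one_mul])
  rwa [map_smul, smul_eq_mul, ← hfx, RCLike.ofReal_re] at this

theorem ext_of_norm_le_one {f g : E →L[𝕜] F} (h : ∀ x, ‖x‖ ≤ 1 → f x = g x) : f = g := by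
  ext x
  set c : 𝕜 := (((‖x‖ + 1)⁻¹ : ℝ) : 𝕜)
  have hc : c ≠ 0 := RCLike.ofReal_ne_zero.2 (by positivity)
  have hcx : ‖c • x‖ ≤ 1 := by
    rw [norm_smul, RCLike.norm_ofReal, abs_of_pos (by positivity), inv_mul_le_one₀ (by positivity)]
    linarith
  simpa [hc] using h (c • x) hcx

theorem ext₂_of_norm_le_one {f g : E →L[𝕜] F →L[𝕜] G}
    (h : ∀ x y, ‖x‖ ≤ 1 → ‖y‖ ≤ 1 → f x y = g x y) : f = g :=
  ext_of_norm_le_one fun x hx => ext_of_norm_le_one fun y hy => h x y hx hy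

end ContinuousLinearMap

namespace WeakBilin

variable {E F : Type*} [AddCommGroup E] [Module ℂ E] [Module ℝ E] [IsScalarTower ℝ ℂ E]
  [AddCommGroup F] [Module ℂ F] (B : E →ₗ[ℂ] F →ₗ[ℂ] ℂ)

/-- Hahn–Banach separation in a weak topology, combined with the fact that the continuous
functionals of `σ(E, F)` are the evaluations at points of `F`. -/
theorem exists_re_lt_of_notMem_closure {s : Set (WeakBilin B)} (hs : Convex ℝ s)
    {x : WeakBilin B} (hx : x ∉ closure s) :
    ∃ (y : F) (u : ℝ), (∀ z ∈ s, (B z y).re < u) ∧ u < (B x y).re := by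
  have : ContinuousSMul ℝ (WeakBilin B) := IsScalarTower.continuousSMul ℂ
  obtain ⟨f, u, hs, hx⟩ :=
    RCLike.geometric_hahn_banach_closed_point (𝕜 := ℂ) hs.closure isClosed_closure hx
  obtain ⟨y, rfl⟩ := LinearMap.dualEmbedding_surjective B f
  exact ⟨y, u, fun z hz => hs z (subset_closure hz), hx⟩

end WeakBilin

namespace NormedSpace

variable {E : Type*} [NormedAddCommGroup E] [NormedSpace ℂ E]

/-- Goldstine's theorem. -/
theorem mem_closure_inclusionInDoubleDual_closedBall (F : StrongDual ℂ (StrongDual ℂ E))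
    (hF : ‖F‖ ≤ 1) :
    (F : WeakBilin (topDualPairing ℂ (StrongDual ℂ E))) ∈
      closure (inclusionInDoubleDual ℂ E '' closedBall 0 1 :
        Set (WeakBilin (topDualPairing ℂ (StrongDual ℂ E)))) := by
  by_contra hFK
  have hconv : Convex ℝ (inclusionInDoubleDual ℂ E '' closedBall 0 1 :
      Set (WeakBilin (topDualPairing ℂ (StrongDual ℂ E)))) :=
    (convex_closedBall 0 1).linear_image
      ((inclusionInDoubleDual ℂ E).toLinearMap.restrictScalars ℝ)
  obtain ⟨x', u, hx'u, hFu⟩ := WeakBilin.exists_re_lt_of_notMem_closure _ hconv hFK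
  have hx' : ‖x'‖ ≤ u := opNorm_le_of_forall_re_le x' fun a ha =>
    (hx'u _ ⟨a, mem_closedBall_zero_iff.2 ha, rfl⟩).le
  have hFx' : (F x').re ≤ u := calc
    (F x').re ≤ ‖F x'‖ := Complex.re_le_norm _
    _ ≤ ‖F‖ * ‖x'‖ := F.le_opNorm x'
    _ ≤ u := by nlinarith [norm_nonneg F, norm_nonneg x']
  exact hFx'.not_gt hFu

end NormedSpace

namespace Arens

section WeakStarNets

variable {X : Type*} [NormedAddCommGroup X] [NormedSpace ℂ X]

theorem exists_wStarTendsto_of_norm_le_one (F : StrongDual ℂ (StrongDual ℂ X)) (hF : ‖F‖ ≤ 1) :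
    ∃ l : Filter (closedBall (0 : X) 1), l.NeBot ∧
      WStarTendsto (Subtype.val : closedBall (0 : X) 1 → X) l F := by
  let ι : closedBall (0 : X) 1 → WeakBilin (topDualPairing ℂ (StrongDual ℂ X)) :=
    fun a => inclusionInDoubleDual ℂ X a
  refine ⟨comap ι (𝓝 (F : WeakBilin (topDualPairing ℂ (StrongDual ℂ X)))),
    comap_neBot_iff.2 fun t ht => ?_,
    fun x' => ((WeakBilin.eval_continuous _ x').tendsto F).comp tendsto_comap⟩
  obtain ⟨_, hFt, a, ha, rfl⟩ :=
    (mem_closure_iff_nhds (X := WeakBilin (topDualPairing ℂ (StrongDual ℂ X)))).1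
      (mem_closure_inclusionInDoubleDual_closedBall F hF) t ht
  exact ⟨⟨a, ha⟩, hFt⟩

/-- A consequence of Banach–Alaoglu. -/
theorem exists_wStarTendsto_of_ultrafilter {ι : Type*} (U : Ultrafilter ι) {x : ι → X} {r : ℝ}
    (hx : ∀ i, ‖x i‖ ≤ r) : ∃ F : StrongDual ℂ (StrongDual ℂ X), WStarTendsto x U F := by
  let φ : ι → WeakDual ℂ (StrongDual ℂ X) :=
    fun i => StrongDual.toWeakDual (inclusionInDoubleDual ℂ X (x i))
  have hφ : ∀ i, φ i ∈ WeakDual.toStrongDual ⁻¹' closedBall 0 r := fun i =>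
    mem_closedBall_zero_iff.2 ((double_dual_bound ℂ X (x i)).trans (hx i))
  obtain ⟨F, -, hF⟩ := (WeakDual.isCompact_closedBall 0 r).ultrafilter_le_nhds' (U.map φ)
    (Ultrafilter.mem_map.2 (univ_mem' hφ))
  exact ⟨WeakDual.toStrongDual F, fun x' => ((WeakDual.eval_continuous x').tendsto F).comp hF⟩

end WeakStarNets

section WeaklyAlmostPeriodic

variable {A : Type*} [NonUnitalNormedRing A] [NormedSpace ℂ A] [IsScalarTower ℂ A A]
  [SMulCommClass ℂ A A] {ι κ : Type*} {li : Filter ι} {lj : Filter κ}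

theorem tendsto_fstArens_apply (a' : StrongDual ℂ A) {a : ι → A}
    {F : StrongDual ℂ (StrongDual ℂ A)} (ha : WStarTendsto a li F)
    (G : StrongDual ℂ (StrongDual ℂ A)) :
    Tendsto (fun i => G (adj (mulCLM A) a' (a i))) li (𝓝 (fstArens A F G a')) :=
  ha _

theorem tendsto_sndArens_apply (a' : StrongDual ℂ A) {b : κ → A}
    {G : StrongDual ℂ (StrongDual ℂ A)} (hb : WStarTendsto b lj G)
    (F : StrongDual ℂ (StrongDual ℂ A)) :
    Tendsto (fun j => F (adj (mulCLM A).flip a' (b j))) lj (𝓝 (sndArens A F G a')) :=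
  hb _

theorem fstArens_apply_eq_sndArens_apply_of_wap {a' : StrongDual ℂ A} (hw : WAP a')
    {F G : StrongDual ℂ (StrongDual ℂ A)} (hF : ‖F‖ ≤ 1) (hG : ‖G‖ ≤ 1) :
    fstArens A F G a' = sndArens A F G a' := by
  obtain ⟨li, hli, ha⟩ := exists_wStarTendsto_of_norm_le_one F hF
  obtain ⟨lj, hlj, hb⟩ := exists_wStarTendsto_of_norm_le_one G hG
  exact hw _ _ li lj hli hlj _ _ (fun a => mem_closedBall_zero_iff.1 a.2)
    (fun b => mem_closedBall_zero_iff.1 b.2) _ _ _ _ (fun a => hb _)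
    (tendsto_fstArens_apply a' ha G) (fun b => ha _) (tendsto_sndArens_apply a' hb F)

theorem wap_of_fstArens_apply_eq_sndArens_apply {a' : StrongDual ℂ A}
    (h : ∀ F G : StrongDual ℂ (StrongDual ℂ A), fstArens A F G a' = sndArens A F G a') :
    WAP a' := by
  intro ι κ li lj _ _ a b ha hb g g' L L' hg hgL hg' hg'L'
  obtain ⟨F, hF⟩ := exists_wStarTendsto_of_ultrafilter (Ultrafilter.of li) ha
  obtain ⟨G, hG⟩ := exists_wStarTendsto_of_ultrafilter (Ultrafilter.of lj) hb
  have hgG : g = fun i => G (adj (mulCLM A) a' (a i)) := funext fun i =>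
    tendsto_nhds_unique ((hg i).mono_left (Ultrafilter.of_le lj)) (hG _)
  have hg'F : g' = fun j => F (adj (mulCLM A).flip a' (b j)) := funext fun j =>
    tendsto_nhds_unique ((hg' j).mono_left (Ultrafilter.of_le li)) (hF _)
  calc L = fstArens A F G a' := tendsto_nhds_unique (hgL.mono_left (Ultrafilter.of_le li))
          (hgG ▸ tendsto_fstArens_apply a' hF G)
    _ = sndArens A F G a' := h F G
    _ = L' := tendsto_nhds_unique (hg'F ▸ tendsto_sndArens_apply a' hG F)
          (hg'L'.mono_left (Ultrafilter.of_le lj))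

theorem wap_iff_forall_fstArens_apply_eq_sndArens_apply (a' : StrongDual ℂ A) :
    WAP a' ↔ ∀ F G : StrongDual ℂ (StrongDual ℂ A), fstArens A F G a' = sndArens A F G a' := by
  refine ⟨fun hw => ?_, wap_of_fstArens_apply_eq_sndArens_apply⟩
  have hbilin : adj (ext3 (mulCLM A)) (inclusionInDoubleDual ℂ _ a') =
      (adj (ext3 (mulCLM A).flip) (inclusionInDoubleDual ℂ _ a')).flip :=
    ext₂_of_norm_le_one fun F G hF hG => fstArens_apply_eq_sndArens_apply_of_wap hw hF hG
  exact fun F G => congr($hbilin F G)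

end WeaklyAlmostPeriodic

end Arens

theorem wap_iff_arens_products_agree_general
    {A : Type*} [NonUnitalNormedRing A] [NormedSpace ℂ A]
    [IsScalarTower ℂ A A] [SMulCommClass ℂ A A] :
    (∀ a' : StrongDual ℂ A, Arens.WAP a' ↔
      ∀ F G : StrongDual ℂ (StrongDual ℂ A), Arens.fstArens A F G a' = Arens.sndArens A F G a') ∧
    (Arens.ArensRegular A ↔ ∀ a' : StrongDual ℂ A, Arens.WAP a') := by
  have key := Arens.wap_iff_forall_fstArens_apply_eq_sndArens_apply (A := A)
  refine ⟨key, fun hreg a' => (key a').2 fun F G => by rw [hreg F G], fun hwap F G => ?_⟩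
  ext a'
  exact (key a').1 (hwap a') F G

/-- A functional `a' ∈ A*` is weakly almost periodic iff the two Arens products agree
against it; consequently `A` is Arens regular iff `wap(A) = A*`. -/
theorem wap_iff_arens_products_agree
    {A : Type*} [NonUnitalNormedRing A] [NormedSpace ℂ A]
    [IsScalarTower ℂ A A] [SMulCommClass ℂ A A] [CompleteSpace A] :
    (∀ a' : StrongDual ℂ A, Arens.WAP a' ↔
      ∀ F G : StrongDual ℂ (StrongDual ℂ A), Arens.fstArens A F G a' = Arens.sndArens A F G a') ∧
    (Arens.ArensRegular A ↔ ∀ a' : StrongDual ℂ A, Arens.WAP a') :=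
  wap_iff_arens_products_agree_general
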